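/- W is a minimum weakly convex dominating set of G if and only if its indicator vector x is an optimal solution of the ILP: minimize Σ x_i subject to x_i + Σ_{j∈N(i)} x_j ≥ 1 for all i, −x_i − x_j + Σ_{k∈N(j), d(i,k)+d(k,j)=d(i,j)} x_k ≥ −1 for all i<j, and x_i ∈ {0,1}. -/

import Mathlib

/-- `D` is a dominating set of `G`. -/
def Dominating {n : ℕ} (G : SimpleGraph (Fin n)) (D : Set (Fin n)) : Prop :=
  ∀ v : Fin n, v ∈ D ∨ ∃ u ∈ D, G.Adj u v

/-- `W` is weakly convex: every pair of its vertices is joined by some shortest path of `G`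
all of whose vertices lie in `W`. -/
def WeaklyConvexSet {n : ℕ} (G : SimpleGraph (Fin n)) (W : Set (Fin n)) : Prop :=
  ∀ u ∈ W, ∀ v ∈ W, ∃ p : G.Walk u v, p.length = G.dist u v ∧ ∀ x ∈ p.support, x ∈ W

/-- `x` is a feasible solution of the ILP for the weakly convex dominating set problem. -/
def FeasibleW {n : ℕ} (G : SimpleGraph (Fin n)) [DecidableRel G.Adj] (x : Fin n → ℤ) : Prop :=
  (∀ i, x i = 0 ∨ x i = 1) ∧
  (∀ i : Fin n, x i + ∑ j ∈ G.neighborFinset i, x j ≥ 1) ∧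
  (∀ i j : Fin n, i < j →
    -x i - x j + ∑ k ∈ (G.neighborFinset j).filter
      (fun k => G.dist i k + G.dist k j = G.dist i j), x k ≥ -1)

variable {n : ℕ}

lemma ind_nonneg (S : Set (Fin n)) (i : Fin n) : 0 ≤ S.indicator (fun _ => (1 : ℤ)) i := by
  classical
  simp only [Set.indicator_apply]; split <;> norm_num

lemma ind_mem {S : Set (Fin n)} {i : Fin n} (h : i ∈ S) :
    S.indicator (fun _ => (1 : ℤ)) i = 1 := Set.indicator_of_mem h _

lemma ind_not_mem {S : Set (Fin n)} {i : Fin n} (h : i ∉ S) :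
    S.indicator (fun _ => (1 : ℤ)) i = 0 := Set.indicator_of_notMem h _

lemma feasible_iff (G : SimpleGraph (Fin n)) [DecidableRel G.Adj] (hG : G.Connected)
    (S : Set (Fin n)) :
    FeasibleW G (S.indicator fun _ => (1 : ℤ)) ↔ Dominating G S ∧ WeaklyConvexSet G S := by
  classical
  constructor
  · rintro ⟨h01, hdom, hcon⟩
    constructor
    · intro v
      by_cases hv : v ∈ S
      · exact Or.inl hv
      · right
        have := hdom v
        rw [ind_not_mem hv, zero_add] at this
        by_contra hno
        push_neg at hno
        have hz : ∑ j ∈ G.neighborFinset v, S.indicator (fun _ => (1:ℤ)) j = 0 := by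
          apply Finset.sum_eq_zero
          intro j hj
          rw [SimpleGraph.mem_neighborFinset] at hj
          exact ind_not_mem (fun hjS => hno j hjS hj.symm)
        omega
    · -- weakly convex, by strong induction on distance
      have key : ∀ d : ℕ, ∀ u ∈ S, ∀ v ∈ S, G.dist u v = d →
          ∃ p : G.Walk u v, p.length = G.dist u v ∧ ∀ x ∈ p.support, x ∈ S := by
        intro d
        induction d with
        | zero =>
          intro u hu v hv hd
          have : u = v := (hG.dist_eq_zero_iff).mp hd
          subst this
          exact ⟨SimpleGraph.Walk.nil, by simp [hd], by simpa using hu⟩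
        | succ d ih =>
          intro u hu v hv hd
          have hne : u ≠ v := by
            intro h; subst h; rw [SimpleGraph.dist_self] at hd; omega
          -- helper to extract k from constraint
          have extract : ∀ i j : Fin n, i ∈ S → j ∈ S → i < j →
              ∃ k, G.Adj j k ∧ G.dist i k + G.dist k j = G.dist i j ∧ k ∈ S := by
            intro i j hi hj hij
            have hc := hcon i j hij
            rw [ind_mem hi, ind_mem hj] at hc
            by_contra hno
            push_neg at hno
            have hz : ∑ k ∈ (G.neighborFinset j).filter
                (fun k => G.dist i k + G.dist k j = G.dist i j),
                S.indicator (fun _ => (1:ℤ)) k = 0 := by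
              apply Finset.sum_eq_zero
              intro k hk
              rw [Finset.mem_filter, SimpleGraph.mem_neighborFinset] at hk
              exact ind_not_mem (fun hkS => hno k hk.1 hk.2 hkS)
            omega
          rcases lt_or_gt_of_ne hne with hlt | hgt
          · obtain ⟨k, hadj, hdk, hkS⟩ := extract u v hu hv hlt
            have hkv : G.dist k v = 1 := SimpleGraph.dist_eq_one_iff_adj.mpr hadj.symm
            have huk : G.dist u k = d := by omega
            obtain ⟨p, hpl, hps⟩ := ih u hu k hkS huk
            refine ⟨p.concat hadj.symm, ?_, ?_⟩
            · rw [SimpleGraph.Walk.length_concat, hpl, huk, hd]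
            · intro x hx
              rw [SimpleGraph.Walk.support_concat,
                List.mem_append] at hx
              rcases hx with hx | hx
              · exact hps x hx
              · simp at hx; subst hx; exact hv
          · obtain ⟨k, hadj, hdk, hkS⟩ := extract v u hv hu hgt
            have hku : G.dist k u = 1 := SimpleGraph.dist_eq_one_iff_adj.mpr hadj.symm
            have hvk : G.dist v k = d := by rw [SimpleGraph.dist_comm] at hd; omega
            have hkv : G.dist k v = d := by rw [SimpleGraph.dist_comm]; exact hvk
            obtain ⟨p, hpl, hps⟩ := ih k hkS v hv hkv
            refine ⟨SimpleGraph.Walk.cons hadj p, ?_, ?_⟩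
            · rw [SimpleGraph.Walk.length_cons, hpl, hkv, hd]
            · intro x hx
              rw [SimpleGraph.Walk.support_cons, List.mem_cons] at hx
              rcases hx with hx | hx
              · subst hx; exact hu
              · exact hps x hx
      intro u hu v hv
      exact key (G.dist u v) u hu v hv rfl
  · rintro ⟨hdom, hwc⟩
    refine ⟨?_, ?_, ?_⟩
    · intro i
      by_cases h : i ∈ S
      · exact Or.inr (ind_mem h)
      · exact Or.inl (ind_not_mem h)
    · intro i
      have hsum : (0:ℤ) ≤ ∑ j ∈ G.neighborFinset i, S.indicator (fun _ => (1:ℤ)) j :=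
        Finset.sum_nonneg fun j _ => ind_nonneg S j
      rcases hdom i with hi | ⟨u, huS, hadj⟩
      · rw [ind_mem hi]; omega
      · have hu : u ∈ G.neighborFinset i := by
          rw [SimpleGraph.mem_neighborFinset]; exact hadj.symm
        have := Finset.single_le_sum (f := fun j => S.indicator (fun _ => (1:ℤ)) j)
          (fun j _ => ind_nonneg S j) hu
        simp only [ind_mem huS] at this
        have := ind_nonneg S i
        omega
    · intro i j hij
      have hsum : (0:ℤ) ≤ ∑ k ∈ (G.neighborFinset j).filter
          (fun k => G.dist i k + G.dist k j = G.dist i j),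
          S.indicator (fun _ => (1:ℤ)) k :=
        Finset.sum_nonneg fun k _ => ind_nonneg S k
      by_cases hi : i ∈ S
      · by_cases hj : j ∈ S
        · -- both in S: find the penultimate vertex
          obtain ⟨p, hpl, hps⟩ := hwc i hi j hj
          have hne : i ≠ j := Fin.ne_of_lt hij
          have hdpos : 0 < G.dist i j := hG.pos_dist_of_ne hne
          obtain ⟨k, hadj, q, hr⟩ : ∃ (k : Fin n) (hadj : G.Adj j k) (q : G.Walk k i),
              p.reverse = SimpleGraph.Walk.cons hadj q := by
            cases hrev : p.reverse with
            | nil =>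
              exfalso
              have : p.reverse.length = 0 := by rw [hrev]; rfl
              rw [SimpleGraph.Walk.length_reverse, hpl] at this
              omega
            | cons hadj q => exact ⟨_, hadj, q, rfl⟩
          have hql : q.length + 1 = G.dist i j := by
            have : p.reverse.length = G.dist i j := by
              rw [SimpleGraph.Walk.length_reverse, hpl]
            rw [hr] at this
            simpa using this
          have hkS : k ∈ S := by
            apply hps
            have : k ∈ p.reverse.support := by
              rw [hr, SimpleGraph.Walk.support_cons]
              exact List.mem_cons_of_mem _ q.start_mem_support
            rwa [SimpleGraph.Walk.support_reverse, List.mem_reverse] at this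
          have hkj : G.dist k j = 1 := SimpleGraph.dist_eq_one_iff_adj.mpr hadj.symm
          have hik : G.dist i k ≤ q.length := by
            have := SimpleGraph.dist_le q.reverse
            simpa using this
          have htri : G.dist i j ≤ G.dist i k + G.dist k j := hG.dist_triangle
          have hmem : k ∈ (G.neighborFinset j).filter
              (fun k => G.dist i k + G.dist k j = G.dist i j) := by
            rw [Finset.mem_filter, SimpleGraph.mem_neighborFinset]
            exact ⟨hadj, by omega⟩
          have hone : (1:ℤ) ≤ ∑ k ∈ (G.neighborFinset j).filter
              (fun k => G.dist i k + G.dist k j = G.dist i j),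
              S.indicator (fun _ => (1:ℤ)) k := by
            have := Finset.single_le_sum (f := fun x => S.indicator (fun _ => (1:ℤ)) x)
              (fun x _ => ind_nonneg S x) hmem
            simp only [ind_mem hkS] at this; exact this
          rw [ind_mem hi, ind_mem hj]
          omega
        · rw [ind_not_mem hj]
          have := ind_nonneg S i
          have h1 : S.indicator (fun _ => (1:ℤ)) i ≤ 1 := by
            rw [ind_mem hi]
          omega
      · rw [ind_not_mem hi]
        have : S.indicator (fun _ => (1:ℤ)) j ≤ 1 := by
          by_cases hj : j ∈ S
          · rw [ind_mem hj]
          · rw [ind_not_mem hj]; omega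
        omega


lemma sum_ind {n : ℕ} (S : Set (Fin n)) :
    ∑ i, S.indicator (fun _ => (1 : ℤ)) i = (S.ncard : ℤ) := by
  classical
  simp only [Set.indicator_apply]
  rw [Finset.sum_boole, Set.ncard_eq_toFinset_card' S]
  congr 1
  apply Finset.card_bij (fun a _ => a) <;> simp [Set.mem_toFinset]

/-- Theorem 3 of the paper: `W` is a minimum weakly convex dominating set of `G` iff its
indicator vector is an optimal solution of the ILP (2), (3), (6), (5). -/
theorem stmt9 {n : ℕ} (G : SimpleGraph (Fin n)) [DecidableRel G.Adj] (hG : G.Connected)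
    (W : Set (Fin n)) :
    ((Dominating G W ∧ WeaklyConvexSet G W) ∧
        ∀ U : Set (Fin n), Dominating G U ∧ WeaklyConvexSet G U → W.ncard ≤ U.ncard) ↔
      (FeasibleW G (W.indicator fun _ => (1 : ℤ)) ∧
        ∀ y : Fin n → ℤ, FeasibleW G y →
          ∑ i, W.indicator (fun _ => (1 : ℤ)) i ≤ ∑ i, y i) := by
  constructor
  · rintro ⟨hW, hmin⟩
    refine ⟨(feasible_iff G hG W).mpr hW, ?_⟩
    intro y hy
    set U : Set (Fin n) := {i | y i = 1} with hUdef
    have hyU : y = U.indicator (fun _ => (1 : ℤ)) := by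
      funext i
      rcases hy.1 i with h | h
      · rw [h, ind_not_mem (by simp [hUdef, Set.mem_setOf_eq]; omega)]
      · rw [h, ind_mem (by simpa [hUdef, Set.mem_setOf_eq] using h)]
    have hUf : FeasibleW G (U.indicator fun _ => (1 : ℤ)) := hyU ▸ hy
    have hU := (feasible_iff G hG U).mp hUf
    have hcard := hmin U hU
    rw [sum_ind, hyU, sum_ind]
    exact_mod_cast hcard
  · rintro ⟨hf, hopt⟩
    refine ⟨(feasible_iff G hG W).mp hf, ?_⟩
    intro U hU
    have hUf := (feasible_iff G hG U).mpr hU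
    have := hopt _ hUf
    rw [sum_ind, sum_ind] at this
    exact_mod_cast this
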